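/- arXiv:1907.01942 — 4 statements merged into one kernel-verified Lean document; each statement's English description precedes it below -/
import Mathlib

section
/- Let 1 ≤ r ≤ d, let Θ ∈ ℝ^{d×r} satisfy ΘᵀΘ = I_r, and let g : ℝ^r → ℝ satisfy the Hölder condition |g(y) − g(y′)| ≤ C‖y − y′‖^α for all y, y′ ∈ ℝ^r, with constant C < ∞ and exponent 0 < α ≤ 1. Let f(x) = g(Θᵀx) and suppose σ² = Var(f(X)) > 0 for X ~ N(0, I_d). Then the mean dimension of f satisfies ν(f) ≤ (C/σ)² · 2^{α−1} · M_{2α} · Σ_{j=1}^d (Σ_{k=1}^r Θ_{jk}²)^α. -/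
open MeasureTheory ProbabilityTheory Real Filter

noncomputable section

/-- Standard Gaussian measure `N(0, I_d)` on `ℝ^d`. -/
def stdGaussian (d : ℕ) : Measure (Fin d → ℝ) :=
  Measure.pi fun _ => gaussianReal 0 1

/-- Sobol' total index `τ̄²_j(f) = (1/2)·E[(f(X) − f(X_{−j}:Z_j))²]`. -/
def sobolTau (d : ℕ) (f : (Fin d → ℝ) → ℝ) (j : Fin d) : ℝ :=
  (1 / 2) * ∫ p : (Fin d → ℝ) × (Fin d → ℝ),
    (f p.1 - f (Function.update p.1 j (p.2 j))) ^ 2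
      ∂((stdGaussian d).prod (stdGaussian d))

/-- Mean dimension `ν(f) = (Σ_j τ̄²_j(f)) / Var(f(X))`. -/
def meanDim (d : ℕ) (f : (Fin d → ℝ) → ℝ) : ℝ :=
  (∑ j, sobolTau d f j) / variance f (stdGaussian d)

/-- Gaussian fractional absolute moment `M_η = 2^{η/2} Γ((η+1)/2) / √π`. -/
def Mmom (η : ℝ) : ℝ := 2 ^ (η / 2) / Real.sqrt π * Real.Gamma ((η + 1) / 2)

/-- Standard normal CDF `Φ`. -/
def Phi (t : ℝ) : ℝ := ((gaussianReal 0 1) (Set.Iic t)).toReal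

/-- Standard normal density `φ`. -/
def gpdf (x : ℝ) : ℝ := Real.exp (-x ^ 2 / 2) / Real.sqrt (2 * π)

/-! Changing the `j`-th coordinate of `x` from `x_j` to `z_j` moves `Θᵀx` by `(x_j - z_j) Θ_{j·}`,
so the Hölder condition bounds the integrand of `τ̄²_j` by `C² ‖Θ_{j·}‖^{2α} |x_j - z_j|^{2α}`.
Since `x_j - z_j ~ N(0, 2)`, the expectation of the latter factor is `2^α M_{2α}`; summing over `j`
and dividing by `σ²` gives the bound. -/

open scoped NNReal

lemma Mmom_pos {p : ℝ} (hp : -1 < p) : 0 < Mmom p := by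
  unfold Mmom
  have := Real.Gamma_pos_of_pos (show 0 < (p + 1) / 2 by linarith)
  positivity

namespace ProbabilityTheory

lemma integral_abs_rpow_gaussianReal_one {p : ℝ} (hp : -1 < p) :
    ∫ x, |x| ^ p ∂gaussianReal 0 1 = Mmom p := by
  have hφ : ∀ x : ℝ, gaussianPDFReal 0 1 x • |x| ^ p
      = (fun y : ℝ => (√(2 * π))⁻¹ * (y ^ p * rexp (-(1 / 2) * y ^ (2 : ℝ)))) |x| := by
    intro x
    simp only [gaussianPDFReal, NNReal.coe_one, mul_one, sub_zero, smul_eq_mul, rpow_two,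
      sq_abs]
    ring_nf
  have hscale : (1 / 2 : ℝ) ^ (-(p + 1) / 2) = 2 ^ (p / 2) * √2 := by
    rw [one_div, inv_rpow zero_le_two, ← rpow_neg zero_le_two, sqrt_eq_rpow,
      ← rpow_add two_pos]
    ring_nf
  rw [integral_gaussianReal_eq_integral_smul one_ne_zero]
  simp_rw [hφ]
  rw [integral_comp_abs (f := fun y => (√(2 * π))⁻¹ * (y ^ p * rexp (-(1 / 2) * y ^ (2 : ℝ)))),
    integral_const_mul, integral_rpow_mul_exp_neg_mul_rpow two_pos hp (by norm_num), hscale,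
    Mmom, sqrt_mul zero_le_two]
  have : 0 < √2 := by positivity
  have : 0 < √π := by positivity
  field_simp

lemma integrable_abs_rpow_gaussianReal_one {p : ℝ} (hp : -1 < p) :
    Integrable (fun x => |x| ^ p) (gaussianReal 0 1) :=
  -- the computation of the integral above holds regardless of integrability
  .of_integral_ne_zero <| by rw [integral_abs_rpow_gaussianReal_one hp]; exact (Mmom_pos hp).ne'

lemma gaussianReal_zero_eq_map_sqrt_mul (v : ℝ≥0) :
    gaussianReal 0 v = (gaussianReal 0 1).map (√(v : ℝ) * ·) := by
  rw [gaussianReal_map_const_mul, mul_zero, mul_one]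
  congr
  ext
  simp

lemma integrable_abs_rpow_gaussianReal {p : ℝ} (hp : -1 < p) (v : ℝ≥0) :
    Integrable (fun x => |x| ^ p) (gaussianReal 0 v) := by
  rw [gaussianReal_zero_eq_map_sqrt_mul, integrable_map_measure
    (by fun_prop : Measurable fun x : ℝ => |x| ^ p).aestronglyMeasurable (by fun_prop)]
  simpa [Function.comp_def, abs_mul, mul_rpow] using
    (integrable_abs_rpow_gaussianReal_one hp).const_mul (|√(v : ℝ)| ^ p)

lemma integral_abs_rpow_gaussianReal {p : ℝ} (hp : -1 < p) (v : ℝ≥0) :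
    ∫ x, |x| ^ p ∂gaussianReal 0 v = (v : ℝ) ^ (p / 2) * Mmom p := by
  rw [gaussianReal_zero_eq_map_sqrt_mul,
    integral_map (by fun_prop) (by fun_prop : Measurable fun x : ℝ => |x| ^ p).aestronglyMeasurable]
  simp_rw [abs_mul, mul_rpow (abs_nonneg _) (abs_nonneg _)]
  rw [integral_const_mul, integral_abs_rpow_gaussianReal_one hp, abs_of_nonneg (sqrt_nonneg _),
    sqrt_eq_rpow, ← rpow_mul v.coe_nonneg]
  ring_nf

lemma gaussianReal_prod_map_sub {m₁ m₂ : ℝ} {v₁ v₂ : ℝ≥0} :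
    ((gaussianReal m₁ v₁).prod (gaussianReal m₂ v₂)).map (fun q => q.1 - q.2)
      = gaussianReal (m₁ - m₂) (v₁ + v₂) := by
  have : (fun q : ℝ × ℝ => q.1 - q.2) = (fun q => q.1 + q.2) ∘ Prod.map id (fun x => -x) := by
    ext; simp [sub_eq_add_neg]
  rw [this, ← Measure.map_map (by fun_prop) (by fun_prop), ← Measure.map_prod_map _ _
    (by fun_prop) (by fun_prop), Measure.map_id, gaussianReal_map_neg, ← Measure.conv,
    gaussianReal_conv_gaussianReal, sub_eq_add_neg]

end ProbabilityTheory

instance (d : ℕ) : IsProbabilityMeasure (stdGaussian d) :=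
  inferInstanceAs (IsProbabilityMeasure (Measure.pi fun _ : Fin d => gaussianReal 0 1))

lemma stdGaussian_map_eval {d : ℕ} (j : Fin d) :
    (stdGaussian d).map (Function.eval j) = gaussianReal 0 1 :=
  (measurePreserving_eval (fun _ : Fin d => gaussianReal 0 1) j).map_eq

lemma stdGaussian_prod_map_sub_eval (d : ℕ) (j : Fin d) :
    ((stdGaussian d).prod (stdGaussian d)).map (fun p => p.1 j - p.2 j) = gaussianReal 0 2 := by
  have : (fun p : (Fin d → ℝ) × (Fin d → ℝ) => p.1 j - p.2 j)
      = (fun q : ℝ × ℝ => q.1 - q.2) ∘ Prod.map (Function.eval j) (Function.eval j) := rfl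
  rw [this, ← Measure.map_map (by fun_prop) (by fun_prop),
    ← Measure.map_prod_map _ _ (by fun_prop) (by fun_prop), stdGaussian_map_eval,
    gaussianReal_prod_map_sub]
  norm_num

lemma integrable_abs_sub_eval_rpow {d : ℕ} (j : Fin d) {q : ℝ} (hq : -1 < q) :
    Integrable (fun p : (Fin d → ℝ) × (Fin d → ℝ) => |p.1 j - p.2 j| ^ q)
      ((stdGaussian d).prod (stdGaussian d)) := by
  have h := integrable_abs_rpow_gaussianReal hq 2
  rw [← stdGaussian_prod_map_sub_eval d j,
    integrable_map_measure (by fun_prop : Measurable fun x : ℝ => |x| ^ q).aestronglyMeasurable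
    (by fun_prop)] at h
  exact h

lemma integral_abs_sub_eval_rpow {d : ℕ} (j : Fin d) {q : ℝ} (hq : -1 < q) :
    ∫ p : (Fin d → ℝ) × (Fin d → ℝ), |p.1 j - p.2 j| ^ q
        ∂((stdGaussian d).prod (stdGaussian d)) = 2 ^ (q / 2) * Mmom q := by
  have h := integral_abs_rpow_gaussianReal hq 2
  rw [← stdGaussian_prod_map_sub_eval d j,
    integral_map (by fun_prop) (by fun_prop : Measurable fun x : ℝ => |x| ^ q).aestronglyMeasurable]
    at h
  simpa using h

section Ridge

variable {d r : ℕ} (Θ : Matrix (Fin d) (Fin r) ℝ)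

lemma sum_mul_sub_sum_mul_update (x : Fin d → ℝ) (j : Fin d) (t : ℝ) (k : Fin r) :
    ∑ i, Θ i k * x i - ∑ i, Θ i k * Function.update x j t i = Θ j k * (x j - t) := by
  rw [← Finset.sum_sub_distrib, Finset.sum_eq_single j (fun i _ hij => by
    rw [Function.update_of_ne hij, sub_self]) (by simp), Function.update_self, mul_sub]

variable {g : (Fin r → ℝ) → ℝ} {C α : ℝ}
  (hg : ∀ y y' : Fin r → ℝ, |g y - g y'| ≤ C * (∑ k, (y k - y' k) ^ 2) ^ (α / 2))
  {f : (Fin d → ℝ) → ℝ} (hf : ∀ x, f x = g (fun k => ∑ j, Θ j k * x j))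
include hg hf

lemma sq_sub_update_le_of_holder (x : Fin d → ℝ) (j : Fin d) (t : ℝ) :
    (f x - f (Function.update x j t)) ^ 2
      ≤ C ^ 2 * (∑ k, Θ j k ^ 2) ^ α * |x j - t| ^ (2 * α) := by
  have hS : 0 ≤ ∑ k, Θ j k ^ 2 := Finset.sum_nonneg fun k _ => sq_nonneg _
  have hdist := hg (fun k => ∑ i, Θ i k * x i) (fun k => ∑ i, Θ i k * Function.update x j t i)
  simp_rw [sum_mul_sub_sum_mul_update, mul_pow, ← Finset.sum_mul] at hdist
  rw [hf, hf, ← sq_abs]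
  calc |_| ^ 2 ≤ (C * ((∑ k, Θ j k ^ 2) * (x j - t) ^ 2) ^ (α / 2)) ^ 2 :=
        pow_le_pow_left₀ (abs_nonneg _) hdist 2
    _ = C ^ 2 * ((∑ k, Θ j k ^ 2) * (x j - t) ^ 2) ^ α := by
        rw [mul_pow, ← rpow_mul_natCast (by positivity)]
        norm_num
    _ = C ^ 2 * (∑ k, Θ j k ^ 2) ^ α * |x j - t| ^ (2 * α) := by
        rw [mul_rpow hS (sq_nonneg _), ← sq_abs (x j - t), ← rpow_natCast_mul (abs_nonneg _)]
        norm_num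
        ring

lemma sobolTau_le_of_holder (hα : 0 < α) (j : Fin d) :
    sobolTau d f j ≤ C ^ 2 * 2 ^ (α - 1) * Mmom (2 * α) * (∑ k, Θ j k ^ 2) ^ α := by
  have hq : -1 < 2 * α := by linarith
  have hmono := integral_mono_of_nonneg (.of_forall fun p => sq_nonneg _)
    ((integrable_abs_sub_eval_rpow j hq).const_mul (C ^ 2 * (∑ k, Θ j k ^ 2) ^ α))
    (.of_forall fun p => sq_sub_update_le_of_holder Θ hg hf p.1 j (p.2 j))
  rw [integral_const_mul, integral_abs_sub_eval_rpow j hq] at hmono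
  calc sobolTau d f j
      ≤ 1 / 2 * (C ^ 2 * (∑ k, Θ j k ^ 2) ^ α * (2 ^ (2 * α / 2) * Mmom (2 * α))) :=
        mul_le_mul_of_nonneg_left hmono (by norm_num)
    _ = C ^ 2 * 2 ^ (α - 1) * Mmom (2 * α) * (∑ k, Θ j k ^ 2) ^ α := by
        rw [rpow_sub two_pos, rpow_one, mul_div_cancel_left₀ α two_ne_zero]
        ring

end Ridge

theorem stmt0_general (d r : ℕ)
    (Θ : Matrix (Fin d) (Fin r) ℝ)
    (g : (Fin r → ℝ) → ℝ) (C α : ℝ) (hα0 : 0 < α)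
    (hg : ∀ y y' : Fin r → ℝ,
      |g y - g y'| ≤ C * (∑ k, (y k - y' k) ^ 2) ^ (α / 2))
    (f : (Fin d → ℝ) → ℝ) (hf : ∀ x, f x = g (fun k => ∑ j, Θ j k * x j)) :
    meanDim d f ≤ (C / Real.sqrt (variance f (stdGaussian d))) ^ 2
      * 2 ^ (α - 1) * Mmom (2 * α) * ∑ j, (∑ k, Θ j k ^ 2) ^ α := by
  have hvar := variance_nonneg f (stdGaussian d)
  calc meanDim d f
      ≤ C ^ 2 * 2 ^ (α - 1) * Mmom (2 * α) * (∑ j, (∑ k, Θ j k ^ 2) ^ α)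
          / variance f (stdGaussian d) := by
        refine div_le_div_of_nonneg_right ?_ hvar
        rw [Finset.mul_sum]
        exact Finset.sum_le_sum fun j _ => sobolTau_le_of_holder Θ hg hf hα0 j
    _ = _ := by
        rw [div_pow, sq_sqrt hvar]
        ring

/-- Theorem 3.1 (Hölder ridge functions): upper bound on the mean dimension. -/
theorem stmt0 (d r : ℕ) (hr : 1 ≤ r) (hrd : r ≤ d)
    (Θ : Matrix (Fin d) (Fin r) ℝ) (hΘ : Θ.transpose * Θ = 1)
    (g : (Fin r → ℝ) → ℝ) (C α : ℝ) (hα0 : 0 < α) (hα1 : α ≤ 1)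
    (hg : ∀ y y' : Fin r → ℝ,
      |g y - g y'| ≤ C * (∑ k, (y k - y' k) ^ 2) ^ (α / 2))
    (f : (Fin d → ℝ) → ℝ) (hf : ∀ x, f x = g (fun k => ∑ j, Θ j k * x j))
    (hσ : 0 < variance f (stdGaussian d)) :
    meanDim d f ≤ (C / Real.sqrt (variance f (stdGaussian d))) ^ 2
      * 2 ^ (α - 1) * Mmom (2 * α) * ∑ j, (∑ k, Θ j k ^ 2) ^ α :=
  stmt0_general d r Θ g C α hα0 hg f hf

end
end

section
/- Let 1 ≤ r ≤ d, let Θ ∈ ℝ^{d×r} satisfy ΘᵀΘ = I_r, and let g : ℝ^r → ℝ be Lipschitz continuous with constant C, i.e., |g(y) − g(y′)| ≤ C‖y − y′‖ for all y, y′ ∈ ℝ^r. Let f(x) = g(Θᵀx) and suppose σ² = Var(f(X)) > 0 for X ~ N(0, I_d). Then the mean dimension of f satisfies ν(f) ≤ r·(C/σ)². -/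
open MeasureTheory ProbabilityTheory Real Filter

noncomputable section

/-!
Moving only the `j`-th coordinate of `x` moves `Θᵀx` by `(x_j - z) Θ_j`, where `Θ_j` is the
`j`-th row of `Θ`, so the Lipschitz bound gives `τ̄²_j(f) ≤ C² ‖Θ_j‖² · E[(X_j - Z_j)²] / 2
= C² ‖Θ_j‖²`. Summing over `j`, the squared row norms add up to `tr(ΘᵀΘ) = r`.
-/

open Function

section DifferenceOfCopies

variable {Ω : Type*} [MeasurableSpace Ω] {μ : Measure Ω} [IsProbabilityMeasure μ] {X : Ω → ℝ}

lemma integrable_sub_sq_prod (hX : MemLp X 2 μ) :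
    Integrable (fun p : Ω × Ω => (X p.1 - X p.2) ^ 2) (μ.prod μ) :=
  ((hX.comp_fst μ).sub (hX.comp_snd μ)).integrable_sq

lemma integral_sub_sq_prod (hX : MemLp X 2 μ) :
    ∫ p : Ω × Ω, (X p.1 - X p.2) ^ 2 ∂(μ.prod μ) = 2 * Var[X; μ] := by
  have hW : MemLp (fun p : Ω × Ω => X p.1 - X p.2) 2 (μ.prod μ) :=
    (hX.comp_fst μ).sub (hX.comp_snd μ)
  have hmean : ∫ p : Ω × Ω, (X p.1 - X p.2) ∂(μ.prod μ) = 0 := by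
    rw [integral_sub ((hX.integrable one_le_two).comp_fst μ)
      ((hX.integrable one_le_two).comp_snd μ), integral_fun_fst, integral_fun_snd]
    simp
  have hvar := variance_add_prod hX hX.neg
  simp only [Pi.neg_apply, ← sub_eq_add_neg, variance_neg] at hvar
  rw [variance_eq_integral hW.aestronglyMeasurable.aemeasurable, hmean] at hvar
  simpa [two_mul] using hvar

end DifferenceOfCopies

instance isProbabilityMeasure_stdGaussian (d : ℕ) : IsProbabilityMeasure (stdGaussian d) := by
  unfold _root_.stdGaussian; infer_instance

lemma memLp_eval_stdGaussian {d : ℕ} (j : Fin d) :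
    MemLp (fun x : Fin d → ℝ => x j) 2 (stdGaussian d) :=
  (memLp_id_gaussianReal 2).comp_measurePreserving (measurePreserving_eval _ j)

lemma variance_eval_stdGaussian {d : ℕ} (j : Fin d) :
    Var[fun x : Fin d → ℝ => x j; stdGaussian d] = 1 := by
  have := (measurePreserving_eval (fun _ : Fin d => gaussianReal 0 1) j).variance_fun_comp
    (f := id) measurable_id.aemeasurable
  exact this.trans variance_id_gaussianReal

lemma sobolTau_le_of_sq_sub_update_le {d : ℕ} {f : (Fin d → ℝ) → ℝ} {j : Fin d} {L : ℝ}
    (h : ∀ x z, (f x - f (update x j z)) ^ 2 ≤ L * (x j - z) ^ 2) :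
    sobolTau d f j ≤ L := by
  have hle := integral_mono_of_nonneg (ae_of_all _ fun _ => sq_nonneg _)
    ((integrable_sub_sq_prod (memLp_eval_stdGaussian j)).const_mul L)
    (ae_of_all _ fun p => h p.1 (p.2 j))
  rw [integral_const_mul, integral_sub_sq_prod (memLp_eval_stdGaussian j),
    variance_eval_stdGaussian] at hle
  rw [sobolTau]
  linarith

lemma meanDim_le_of_sum_sobolTau_le {d : ℕ} {f : (Fin d → ℝ) → ℝ} {B : ℝ}
    (h : ∑ j, sobolTau d f j ≤ B) : meanDim d f ≤ B / Var[f; stdGaussian d] :=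
  div_le_div_of_nonneg_right h (variance_nonneg _ _)

section Ridge

variable {ι κ : Type*} [Fintype ι]

lemma sum_sq_eq_card_of_transpose_mul_self_eq_one [Fintype κ] [DecidableEq κ]
    {Θ : Matrix ι κ ℝ} (hΘ : Θ.transpose * Θ = 1) :
    ∑ i, ∑ k, Θ i k ^ 2 = Fintype.card κ := by
  have htrace := congrArg Matrix.trace hΘ
  rw [Matrix.trace_one] at htrace
  rw [← htrace, Finset.sum_comm]
  simp [Matrix.trace, Matrix.mul_apply, sq]

variable [DecidableEq ι]

lemma sum_mul_update_sub (Θ : Matrix ι κ ℝ) (x : ι → ℝ) (i : ι) (z : ℝ) (k : κ) :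
    ∑ l, Θ l k * x l - ∑ l, Θ l k * update x i z l = Θ i k * (x i - z) := by
  rw [← Finset.sum_sub_distrib, Finset.sum_eq_single i]
  · rw [update_self]; ring
  · intro l _ hli; rw [update_of_ne hli]; ring
  · simp

lemma sq_sub_update_le_of_lipschitz_ridge [Fintype κ] (Θ : Matrix ι κ ℝ)
    {g : (κ → ℝ) → ℝ} {C : ℝ}
    (hg : ∀ y y' : κ → ℝ, |g y - g y'| ≤ C * √(∑ k, (y k - y' k) ^ 2))
    (x : ι → ℝ) (i : ι) (z : ℝ) :
    (g (fun k => ∑ l, Θ l k * x l) - g (fun k => ∑ l, Θ l k * update x i z l)) ^ 2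
      ≤ C ^ 2 * (∑ k, Θ i k ^ 2) * (x i - z) ^ 2 := by
  have hdist := hg (fun k => ∑ l, Θ l k * x l) (fun k => ∑ l, Θ l k * update x i z l)
  simp only [sum_mul_update_sub, mul_pow, ← Finset.sum_mul] at hdist
  calc _ = |g _ - g _| ^ 2 := (sq_abs _).symm
    _ ≤ (C * √((∑ k, Θ i k ^ 2) * (x i - z) ^ 2)) ^ 2 :=
        pow_le_pow_left₀ (abs_nonneg _) hdist 2
    _ = _ := by rw [mul_pow, Real.sq_sqrt (by positivity), mul_assoc]

end Ridge

theorem stmt1_general (d r : ℕ)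
    (Θ : Matrix (Fin d) (Fin r) ℝ) (hΘ : Θ.transpose * Θ = 1)
    (g : (Fin r → ℝ) → ℝ) (C : ℝ)
    (hg : ∀ y y' : Fin r → ℝ,
      |g y - g y'| ≤ C * Real.sqrt (∑ k, (y k - y' k) ^ 2))
    (f : (Fin d → ℝ) → ℝ) (hf : ∀ x, f x = g (fun k => ∑ j, Θ j k * x j)) :
    meanDim d f ≤ r * (C / Real.sqrt (variance f (stdGaussian d))) ^ 2 := by
  have hsum : ∑ j, sobolTau d f j ≤ C ^ 2 * r := by
    calc ∑ j, sobolTau d f j ≤ ∑ j, C ^ 2 * ∑ k, Θ j k ^ 2 :=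
          Finset.sum_le_sum fun j _ => sobolTau_le_of_sq_sub_update_le fun x z => by
            simpa only [hf] using sq_sub_update_le_of_lipschitz_ridge Θ hg x j z
      _ = C ^ 2 * r := by
          rw [← Finset.mul_sum, sum_sq_eq_card_of_transpose_mul_self_eq_one hΘ,
            Fintype.card_fin]
  calc meanDim d f ≤ C ^ 2 * r / variance f (stdGaussian d) :=
        meanDim_le_of_sum_sobolTau_le hsum
    _ = r * (C / √(variance f (stdGaussian d))) ^ 2 := by
        rw [div_pow, Real.sq_sqrt (variance_nonneg _ _)]; ring

/-- Corollary 3.2 (Lipschitz ridge functions): `ν(f) ≤ r (C/σ)²`. -/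
theorem stmt1 (d r : ℕ) (hr : 1 ≤ r) (hrd : r ≤ d)
    (Θ : Matrix (Fin d) (Fin r) ℝ) (hΘ : Θ.transpose * Θ = 1)
    (g : (Fin r → ℝ) → ℝ) (C : ℝ)
    (hg : ∀ y y' : Fin r → ℝ,
      |g y - g y'| ≤ C * Real.sqrt (∑ k, (y k - y' k) ^ 2))
    (f : (Fin d → ℝ) → ℝ) (hf : ∀ x, f x = g (fun k => ∑ j, Θ j k * x j))
    (hσ : 0 < variance f (stdGaussian d)) :
    meanDim d f ≤ r * (C / Real.sqrt (variance f (stdGaussian d))) ^ 2 :=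
  stmt1_general d r Θ hΘ g C hg f hf
end
end

section
/- Let f(x) = 1{θᵀx > t} for a threshold t ≥ 0 and a unit vector θ ∈ ℝ^d. Then for d ≥ 2, the mean dimension of f with respect to X ~ N(0, I_d) satisfies ν(f) ≤ (‖θ‖₁ / (Φ(t)Φ(−t)√(2π))) · (√2 + 2√(log(d/‖θ‖₁))), where ‖θ‖₁ = Σ_{j=1}^d |θ_j|. -/
open MeasureTheory ProbabilityTheory Real Filter

noncomputable section

/-!
Resampling the `j`-th coordinate changes `f` only if `W = ∑_{i ≠ j} θ_i x_i` falls between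
`t - θ_j x_j` and `t - θ_j z_j`, an interval of length `|θ_j| |x_j - z_j|`. Since `W` is
`N(0, 1 - θ_j²)` and independent of `x_j, z_j`, its density is at most `1 / √(2π(1 - θ_j²))`,
and `E|x_j - z_j| = 2 / √π`; hence `τ̄²_j ≤ |θ_j| / (√π √(2π(1 - θ_j²)))`. This is at most
`|θ_j| / √π` when `θ_j² < π / 4`, and otherwise the trivial bound `τ̄²_j ≤ 1 / 2` is.
As `Var f = Φ(t) Φ(-t)`, this gives `ν(f) ≤ ‖θ‖₁ / (√π Φ(t) Φ(-t))`, which is the claimed bound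
without its logarithmic term.
-/

instance inst_s5 (d : ℕ) : IsProbabilityMeasure (stdGaussian d) := by
  unfold _root_.stdGaussian; infer_instance

lemma integral_Ioi_mul_exp_neg_mul_sq {b : ℝ} (hb : 0 < b) :
    ∫ x in Set.Ioi (0 : ℝ), x * exp (-b * x ^ 2) = (2 * b)⁻¹ := by
  have h := integral_rpow_mul_exp_neg_mul_rpow two_pos (by norm_num : (-1 : ℝ) < 1) hb
  norm_num [Real.rpow_neg_one] at h
  simp only [neg_mul]
  rw [h]
  ring

lemma integral_abs_gaussianReal (v : NNReal) :
    ∫ x, |x| ∂gaussianReal 0 v = √(2 * v / π) := by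
  rcases eq_or_ne v 0 with rfl | hv
  · simp
  set g : ℝ → ℝ := fun y => (√(2 * π * v))⁻¹ * (y * exp (-(2 * (v : ℝ))⁻¹ * y ^ 2))
  calc ∫ x, |x| ∂gaussianReal 0 v
      = ∫ x, g |x| := by
        rw [integral_gaussianReal_eq_integral_smul hv]
        congr 1 with x
        simp only [g, gaussianPDFReal_def, sq_abs, smul_eq_mul]
        ring_nf
    _ = 2 * (√(2 * π * v))⁻¹ * (2 * (2 * (v : ℝ))⁻¹)⁻¹ := by
        rw [integral_comp_abs, integral_const_mul,
          integral_Ioi_mul_exp_neg_mul_sq (by positivity)]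
        ring
    _ = √(2 * v / π) := by
        rw [show 2 * π * v = (2 * v / π) * π ^ 2 by field_simp, Real.sqrt_mul (by positivity),
          Real.sqrt_sq pi_pos.le]
        have : 0 < √(2 * v / π) := by positivity
        field_simp
        rw [Real.sq_sqrt (by positivity)]
        field_simp

lemma gaussianReal_apply_le (μ : ℝ) {v : NNReal} (hv : v ≠ 0) (s : Set ℝ) :
    gaussianReal μ v s ≤ ENNReal.ofReal (√(2 * π * v))⁻¹ * volume s := by
  rw [gaussianReal_apply μ hv, ← setLIntegral_const]
  refine setLIntegral_mono measurable_const fun x _ => ENNReal.ofReal_le_ofReal ?_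
  rw [gaussianPDFReal_def]
  refine mul_le_of_le_one_right (by positivity) (Real.exp_le_one_iff.2 ?_)
  exact div_nonpos_of_nonpos_of_nonneg (neg_nonpos.2 (sq_nonneg _)) (by positivity)

lemma lintegral_abs_sub_gaussianReal :
    ∫⁻ u, ∫⁻ w, ENNReal.ofReal |u - w| ∂gaussianReal 0 1 ∂gaussianReal 0 1
      = ENNReal.ofReal (2 / √π) := by
  have hneg (u : ℝ) : ∫⁻ w, ENNReal.ofReal |u - w| ∂gaussianReal 0 1
      = ∫⁻ w, ENNReal.ofReal |u + w| ∂gaussianReal 0 1 := by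
    conv_lhs => rw [← neg_zero, ← gaussianReal_map_neg, lintegral_map (by fun_prop) (by fun_prop)]
    simp [sub_eq_add_neg]
  have hint : Integrable (fun x : ℝ => |x|) (gaussianReal 0 2) := IsGaussian.integrable_id.abs
  simp_rw [hneg]
  rw [← Measure.lintegral_conv (f := fun x => ENNReal.ofReal |x|) (by fun_prop),
    gaussianReal_conv_gaussianReal, add_zero, one_add_one_eq_two,
    ← ofReal_integral_eq_lintegral_ofReal hint (ae_of_all _ fun _ => abs_nonneg _),
    integral_abs_gaussianReal]
  congr 1
  rw [Real.sqrt_div (by positivity), show ((2 : NNReal) : ℝ) = 2 from rfl,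
    Real.sqrt_mul_self zero_le_two]

open WithLp in
lemma map_sum_mul_pi_gaussianReal {ι : Type*} [Fintype ι] (s : Finset ι) (c : ι → ℝ) :
    (Measure.pi fun _ : ι => gaussianReal 0 1).map (fun x => ∑ i ∈ s, c i * x i)
      = gaussianReal 0 (∑ i ∈ s, c i ^ 2).toNNReal := by
  classical
  set L : StrongDual ℝ (EuclideanSpace ℝ ι) := innerSL ℝ (toLp 2 fun i => if i ∈ s then c i else 0)
  have hL : (fun x : ι → ℝ => ∑ i ∈ s, c i * x i) = L ∘ toLp 2 := by
    ext x; simp [L, PiLp.inner_apply, mul_comm, Finset.sum_ite_mem]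
  rw [hL, ← Measure.map_map (by fun_prop) (by fun_prop), map_pi_eq_stdGaussian,
    IsGaussian.map_eq_gaussianReal, integral_strongDual_stdGaussian, variance_dual_stdGaussian,
    innerSL_apply_norm, EuclideanSpace.norm_sq_eq]
  simp [Finset.sum_ite_mem]

lemma map_eval_sum_erase_pi_gaussianReal {ι : Type*} [Fintype ι] [DecidableEq ι] (j : ι)
    (c : ι → ℝ) :
    (Measure.pi fun _ : ι => gaussianReal 0 1).map
        (fun x => (x j, ∑ i ∈ Finset.univ.erase j, c i * x i))
      = (gaussianReal 0 1).prod
          (gaussianReal 0 (∑ i ∈ Finset.univ.erase j, c i ^ 2).toNNReal) := by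
  set μ := Measure.pi fun _ : ι => gaussianReal 0 1
  have hcoord : iIndepFun (fun i (x : ι → ℝ) => x i) μ :=
    iIndepFun_pi (X := fun _ => id) fun _ => aemeasurable_id
  have hindep := (hcoord.indepFun_finset {j} (Finset.univ.erase j) (by simp) (by fun_prop)).comp
    (measurable_pi_apply ⟨j, Finset.mem_singleton_self j⟩)
    (by fun_prop : Measurable fun y : Finset.univ.erase j → ℝ => ∑ i, c i.1 * y i)
  have hW : (fun x : ι → ℝ => ∑ i : Finset.univ.erase j, c i * x i)
      = fun x => ∑ i ∈ Finset.univ.erase j, c i * x i :=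
    funext fun x => Finset.sum_coe_sort _ (fun i => c i * x i)
  simp only [Function.comp_def, hW] at hindep
  have hWm : Measurable fun x : ι → ℝ => ∑ i ∈ Finset.univ.erase j, c i * x i := by fun_prop
  rw [(indepFun_iff_map_prod_eq_prod_map_map (measurable_pi_apply j).aemeasurable
      hWm.aemeasurable).1 hindep,
    (measurePreserving_eval _ j).map_eq, map_sum_mul_pi_gaussianReal]

lemma map_prod_stdGaussian_eval_sum_erase_eval {d : ℕ} (j : Fin d) (c : Fin d → ℝ) :
    ((stdGaussian d).prod (stdGaussian d)).map
        (fun p => ((p.1 j, ∑ i ∈ Finset.univ.erase j, c i * p.1 i), p.2 j))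
      = ((gaussianReal 0 1).prod
          (gaussianReal 0 (∑ i ∈ Finset.univ.erase j, c i ^ 2).toNNReal)).prod
          (gaussianReal 0 1) := by
  rw [show (fun p : (Fin d → ℝ) × (Fin d → ℝ) =>
      ((p.1 j, ∑ i ∈ Finset.univ.erase j, c i * p.1 i), p.2 j))
      = Prod.map (fun x => (x j, ∑ i ∈ Finset.univ.erase j, c i * x i)) (fun z => z j) from rfl,
    ← Measure.map_prod_map _ _ (by fun_prop) (by fun_prop), _root_.stdGaussian,
    map_eval_sum_erase_pi_gaussianReal,
    (measurePreserving_eval (fun _ : Fin d => gaussianReal 0 1) j).map_eq]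

lemma prod_gaussianReal_uIcc_le (c t : ℝ) {v : NNReal} (hv : v ≠ 0) :
    (((gaussianReal 0 1).prod (gaussianReal 0 v)).prod (gaussianReal 0 1))
        {q | q.1.2 ∈ Set.uIcc (t - c * q.1.1) (t - c * q.2)}
      ≤ ENNReal.ofReal (|c| * (2 / √π) / √(2 * π * v)) := by
  have hS : MeasurableSet {q : (ℝ × ℝ) × ℝ | q.1.2 ∈ Set.uIcc (t - c * q.1.1) (t - c * q.2)} := by
    simp only [Set.uIcc, Set.mem_Icc, Set.ofPred_and]
    exact (measurableSet_le (by fun_prop) (by fun_prop)).inter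
      (measurableSet_le (by fun_prop) (by fun_prop))
  have hslice (u w : ℝ) : gaussianReal 0 v (Set.uIcc (t - c * u) (t - c * w))
      ≤ ENNReal.ofReal (√(2 * π * v))⁻¹ * ENNReal.ofReal |c| * ENNReal.ofReal |w - u| := by
    refine (gaussianReal_apply_le 0 hv _).trans_eq ?_
    rw [Real.volume_interval, show t - c * w - (t - c * u) = c * (u - w) by ring, abs_mul,
      ENNReal.ofReal_mul (abs_nonneg c), abs_sub_comm, ← mul_assoc]
  rw [Measure.prod_apply_symm hS]
  calc ∫⁻ w, ((gaussianReal 0 1).prod (gaussianReal 0 v))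
          ((fun p => (p, w)) ⁻¹' {q | q.1.2 ∈ Set.uIcc (t - c * q.1.1) (t - c * q.2)})
          ∂gaussianReal 0 1
      = ∫⁻ w, ∫⁻ u, gaussianReal 0 v (Set.uIcc (t - c * u) (t - c * w))
          ∂gaussianReal 0 1 ∂gaussianReal 0 1 := by
        congr 1 with w
        exact Measure.prod_apply (hS.preimage (by fun_prop))
    _ ≤ ∫⁻ w, ∫⁻ u, ENNReal.ofReal (√(2 * π * v))⁻¹ * ENNReal.ofReal |c| * ENNReal.ofReal |w - u|
          ∂gaussianReal 0 1 ∂gaussianReal 0 1 :=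
        lintegral_mono fun w => lintegral_mono fun u => hslice u w
    _ = ENNReal.ofReal (√(2 * π * v))⁻¹ * ENNReal.ofReal |c| * ENNReal.ofReal (2 / √π) := by
        simp_rw [lintegral_const_mul' _ _
          (ENNReal.mul_ne_top ENNReal.ofReal_ne_top ENNReal.ofReal_ne_top)]
        rw [lintegral_abs_sub_gaussianReal]
    _ = ENNReal.ofReal (|c| * (2 / √π) / √(2 * π * v)) := by
        rw [← ENNReal.ofReal_mul (by positivity), ← ENNReal.ofReal_mul (by positivity)]
        congr 1
        ring

lemma sq_ite_sub_ite_le_indicator (t a b w : ℝ) :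
    ((if t < a + w then (1 : ℝ) else 0) - if t < b + w then 1 else 0) ^ 2
      ≤ (Set.uIcc (t - a) (t - b)).indicator 1 w := by
  by_cases hw : w ∈ Set.uIcc (t - a) (t - b)
  · rw [Set.indicator_of_mem hw]
    split_ifs <;> norm_num
  · rw [Set.indicator_of_notMem hw]
    simp only [Set.mem_uIcc, not_or, not_and_or, not_le] at hw
    split_ifs <;> norm_num <;> rcases hw with ⟨h1 | h1, h2 | h2⟩ <;> linarith

lemma sq_sub_update_halfspace_le {d : ℕ} (t : ℝ) (θ : Fin d → ℝ) (f : (Fin d → ℝ) → ℝ)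
    (hf : ∀ x, f x = if t < ∑ j, θ j * x j then (1 : ℝ) else 0) (x : Fin d → ℝ) (j : Fin d)
    (w : ℝ) :
    (f x - f (Function.update x j w)) ^ 2
      ≤ (Set.uIcc (t - θ j * x j) (t - θ j * w)).indicator 1
          (∑ i ∈ Finset.univ.erase j, θ i * x i) := by
  have hf_update (w : ℝ) : f (Function.update x j w)
      = if t < θ j * w + ∑ i ∈ Finset.univ.erase j, θ i * x i then 1 else 0 := by
    rw [hf, ← Finset.add_sum_erase _ _ (Finset.mem_univ j), Function.update_self]
    congr 3
    refine Finset.sum_congr rfl fun i hi => ?_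
    rw [Function.update_of_ne (Finset.ne_of_mem_erase hi)]
  have hf_self := hf_update (x j)
  rw [Function.update_eq_self] at hf_self
  rw [hf_self, hf_update]
  exact sq_ite_sub_ite_le_indicator _ _ _ _

lemma sobolTau_le_half {d : ℕ} (f : (Fin d → ℝ) → ℝ) (hf : ∀ x, 0 ≤ f x ∧ f x ≤ 1)
    (j : Fin d) : sobolTau d f j ≤ 1 / 2 := by
  have hsq (x y : Fin d → ℝ) : (f x - f y) ^ 2 ≤ 1 := by
    nlinarith [hf x, hf y]
  have h := integral_mono_of_nonneg (ae_of_all _ fun p => sq_nonneg _) (integrable_const (1 : ℝ))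
    (ae_of_all ((stdGaussian d).prod (stdGaussian d)) fun p =>
      hsq p.1 (Function.update p.1 j (p.2 j)))
  simp only [integral_const, probReal_univ, one_smul] at h
  unfold sobolTau
  linarith

lemma sobolTau_halfspace_le {d : ℕ} (t : ℝ) (θ : Fin d → ℝ) (f : (Fin d → ℝ) → ℝ)
    (hf : ∀ x, f x = if t < ∑ j, θ j * x j then (1 : ℝ) else 0) (j : Fin d)
    (hv : ∑ i ∈ Finset.univ.erase j, θ i ^ 2 ≠ 0) :
    sobolTau d f j
      ≤ |θ j| / (√π * √(2 * π * ∑ i ∈ Finset.univ.erase j, θ i ^ 2)) := by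
  set v := ∑ i ∈ Finset.univ.erase j, θ i ^ 2
  set W : (Fin d → ℝ) → ℝ := fun x => ∑ i ∈ Finset.univ.erase j, θ i * x i
  set S : Set ((ℝ × ℝ) × ℝ) := {q | q.1.2 ∈ Set.uIcc (t - θ j * q.1.1) (t - θ j * q.2)}
  set Ψ : (Fin d → ℝ) × (Fin d → ℝ) → (ℝ × ℝ) × ℝ := fun p => ((p.1 j, W p.1), p.2 j)
  have hΨm : Measurable Ψ := by fun_prop
  have hSm : MeasurableSet S := by
    simp only [S, Set.uIcc, Set.mem_Icc, Set.ofPred_and]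
    exact (measurableSet_le (by fun_prop) (by fun_prop)).inter
      (measurableSet_le (by fun_prop) (by fun_prop))
  have hpt (p : (Fin d → ℝ) × (Fin d → ℝ)) :
      (f p.1 - f (Function.update p.1 j (p.2 j))) ^ 2 ≤ (Ψ ⁻¹' S).indicator 1 p :=
    sq_sub_update_halfspace_le t θ f hf p.1 j (p.2 j)
  have hlaw : ((stdGaussian d).prod (stdGaussian d)).map Ψ
      = ((gaussianReal 0 1).prod (gaussianReal 0 v.toNNReal)).prod (gaussianReal 0 1) :=
    map_prod_stdGaussian_eval_sum_erase_eval j θ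
  have hv_pos : 0 < v := lt_of_le_of_ne (by positivity) (Ne.symm hv)
  have hbound := prod_gaussianReal_uIcc_le (θ j) t (Real.toNNReal_pos.2 hv_pos).ne'
  rw [← hlaw, Measure.map_apply hΨm hSm, Real.coe_toNNReal _ hv_pos.le] at hbound
  have hint := integral_mono_of_nonneg (ae_of_all _ fun p => sq_nonneg _)
    ((integrable_const (1 : ℝ)).indicator (hΨm hSm))
    (ae_of_all ((stdGaussian d).prod (stdGaussian d)) hpt)
  rw [integral_indicator_const _ (hΨm hSm), smul_eq_mul, mul_one, measureReal_def] at hint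
  have hreal := ENNReal.toReal_le_of_le_ofReal (by positivity) hbound
  calc sobolTau d f j ≤ 1 / 2 * (|θ j| * (2 / √π) / √(2 * π * v)) := by
        unfold sobolTau
        linarith
    _ = |θ j| / (√π * √(2 * π * v)) := by
        field_simp

lemma sobolTau_halfspace_le_abs_div_sqrt_pi {d : ℕ} (t : ℝ) (θ : Fin d → ℝ)
    (hθ : ∑ j, θ j ^ 2 = 1) (f : (Fin d → ℝ) → ℝ)
    (hf : ∀ x, f x = if t < ∑ j, θ j * x j then (1 : ℝ) else 0) (j : Fin d) :
    sobolTau d f j ≤ |θ j| / √π := by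
  have hsqrtπ : 0 < √π := Real.sqrt_pos.2 pi_pos
  rcases le_or_gt (π / 4) (θ j ^ 2) with hbig | hsmall
  · have hf01 (x : Fin d → ℝ) : 0 ≤ f x ∧ f x ≤ 1 := by
      rw [hf]; split_ifs <;> norm_num
    refine (sobolTau_le_half f hf01 j).trans ?_
    rw [le_div_iff₀ hsqrtπ]
    nlinarith [Real.sq_sqrt pi_pos.le, sq_abs (θ j), abs_nonneg (θ j)]
  · have hv : ∑ i ∈ Finset.univ.erase j, θ i ^ 2 = 1 - θ j ^ 2 := by
      rw [← hθ, ← Finset.add_sum_erase _ _ (Finset.mem_univ j)]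
      ring
    have hone : 1 ≤ 2 * π * (1 - θ j ^ 2) := by nlinarith [pi_gt_three, pi_lt_d2]
    refine (sobolTau_halfspace_le t θ f hf j (by rw [hv]; nlinarith [pi_lt_d2])).trans ?_
    rw [hv]
    refine div_le_div_of_nonneg_left (abs_nonneg _) hsqrtπ ?_
    exact le_mul_of_one_le_right hsqrtπ.le (Real.one_le_sqrt.2 hone)

lemma Phi_neg (t : ℝ) : Phi (-t) = (gaussianReal 0 1).real (Set.Ioi t) := by
  have hatom : gaussianReal 0 1 {t} = 0 :=
    gaussianReal_absolutelyContinuous 0 one_ne_zero (Real.volume_singleton)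
  have hsymm : (gaussianReal 0 1).map (fun x => -x) = gaussianReal 0 1 := by
    rw [gaussianReal_map_neg, neg_zero]
  rw [Phi, ← measureReal_def]
  nth_rewrite 1 [← hsymm]
  rw [map_measureReal_apply measurable_neg measurableSet_Iic,
    Set.neg_preimage, Set.neg_Iic, neg_neg]
  exact measureReal_congr (Ioi_ae_eq_Ici' hatom).symm

lemma Phi_eq_one_sub (t : ℝ) : Phi t = 1 - (gaussianReal 0 1).real (Set.Ioi t) := by
  rw [Phi, ← measureReal_def, ← probReal_compl_eq_one_sub measurableSet_Ioi, Set.compl_Ioi]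

lemma variance_halfspace {d : ℕ} (t : ℝ) (θ : Fin d → ℝ) (hθ : ∑ j, θ j ^ 2 = 1)
    (f : (Fin d → ℝ) → ℝ) (hf : ∀ x, f x = if t < ∑ j, θ j * x j then (1 : ℝ) else 0) :
    variance f (stdGaussian d) = Phi t * Phi (-t) := by
  set A := {x : Fin d → ℝ | t < ∑ j, θ j * x j}
  have hAm : MeasurableSet A := measurableSet_lt measurable_const (by fun_prop)
  have hfA : f = A.indicator 1 := funext fun x => by simp [hf, A, Set.indicator_apply]
  have hA : (stdGaussian d).real A = (gaussianReal 0 1).real (Set.Ioi t) := by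
    have hlaw := map_sum_mul_pi_gaussianReal Finset.univ θ
    rw [hθ, Real.toNNReal_one] at hlaw
    rw [← hlaw, map_measureReal_apply (by fun_prop) measurableSet_Ioi, _root_.stdGaussian]
    rfl
  have hmem : MemLp f 2 (stdGaussian d) := by
    rw [hfA]
    exact ((memLp_top_const (1 : ℝ)).indicator hAm).mono_exponent le_top
  have hsq : f ^ 2 = f := funext fun x => by
    rw [Pi.pow_apply, hf]; split_ifs <;> norm_num
  rw [variance_eq_sub hmem, hsq, hfA, integral_indicator_one hAm, hA, Phi_eq_one_sub, Phi_neg]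
  ring

theorem stmt5_general (d : ℕ) (t : ℝ)
    (θ : Fin d → ℝ) (hθ : ∑ j, θ j ^ 2 = 1)
    (f : (Fin d → ℝ) → ℝ)
    (hf : ∀ x, f x = if t < ∑ j, θ j * x j then (1 : ℝ) else 0) :
    meanDim d f ≤ (∑ j, |θ j|) / (Phi t * Phi (-t) * Real.sqrt (2 * π))
      * (Real.sqrt 2 + 2 * Real.sqrt (Real.log ((d : ℝ) / ∑ j, |θ j|))) := by
  set A := ∑ j, |θ j|
  set P := Phi t * Phi (-t)
  have hτ : ∑ j, sobolTau d f j ≤ A / √π := by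
    rw [Finset.sum_div]
    exact Finset.sum_le_sum fun j _ => sobolTau_halfspace_le_abs_div_sqrt_pi t θ hθ f hf j
  have hP : 0 ≤ P := by unfold P Phi; positivity
  have hA : 0 ≤ A := Finset.sum_nonneg fun j _ => abs_nonneg _
  rw [meanDim, variance_halfspace t θ hθ f hf]
  calc (∑ j, sobolTau d f j) / P
      ≤ A / √π / P := div_le_div_of_nonneg_right hτ hP
    _ = A / (P * √(2 * π)) * √2 := by
        rw [Real.sqrt_mul zero_le_two]
        field_simp
    _ ≤ A / (P * √(2 * π)) * (√2 + 2 * √(log (d / A))) :=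
        mul_le_mul_of_nonneg_left (by linarith [Real.sqrt_nonneg (log (d / A))])
          (div_nonneg hA (mul_nonneg hP (Real.sqrt_nonneg _)))

/-- Theorem 4.1 (upper bound for the mean dimension of a linear step function). -/
theorem stmt5 (d : ℕ) (hd : 2 ≤ d) (t : ℝ) (ht : 0 ≤ t)
    (θ : Fin d → ℝ) (hθ : ∑ j, θ j ^ 2 = 1)
    (f : (Fin d → ℝ) → ℝ)
    (hf : ∀ x, f x = if t < ∑ j, θ j * x j then (1 : ℝ) else 0) :
    meanDim d f ≤ (∑ j, |θ j|) / (Phi t * Phi (-t) * Real.sqrt (2 * π))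
      * (Real.sqrt 2 + 2 * Real.sqrt (Real.log ((d : ℝ) / ∑ j, |θ j|))) :=
  stmt5_general d t θ hθ f hf
end
end

section
/- Let θ ∈ ℝ^d be a unit vector with |θ_ℓ| < 1 for some ℓ ∈ {1,…,d}, let g : ℝ → ℝ be measurable with g(θᵀX) square-integrable for X ~ N(0, I_d), and let f(x) = g(θᵀx). Define the preintegrated function f̄_ℓ(x) = ∫_{−∞}^{∞} φ(x_ℓ) f(x) dx_ℓ. Then f̄_ℓ is again a ridge function: f̄_ℓ(x) = ḡ_ℓ(θ_ℓ^{*T} x) where θ_ℓ^* is the unit vector obtained from θ by replacing θ_ℓ with 0 and dividing by (1 − θ_ℓ²)^{1/2}, and ḡ_ℓ(y) = ∫_{−∞}^{∞} φ(x) g(θ_ℓ x + (1 − θ_ℓ²)^{1/2} y) dx. Moreover, if g satisfies |g(y) − g(y′)| ≤ C|y − y′|^α for all y, y′ ∈ ℝ with C < ∞ and α ∈ (0,1], then ḡ_ℓ satisfies the Hölder condition with the same exponent α and constant (1 − θ_ℓ²)^{α/2} C. -/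
open MeasureTheory ProbabilityTheory Real Filter

noncomputable section

/-- Preintegration of `f` over coordinate `ℓ` with the standard Gaussian
weight: `f̄_ℓ(x) = ∫ φ(x_ℓ) f(x) dx_ℓ`. -/
def preint (d : ℕ) (f : (Fin d → ℝ) → ℝ) (ℓ : Fin d) (x : Fin d → ℝ) : ℝ :=
  ∫ z : ℝ, gpdf z * f (Function.update x ℓ z)

/-! Along the line `x + t e_ℓ`, the linear form `θᵀx` equals
`θ_ℓ t + √(1 - θ_ℓ²) θ_ℓ^{*T} x`, so preintegrating `g(θᵀx)` over `x_ℓ` is literally `ḡ_ℓ(θ_ℓ^{*T} x)`.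
Since `ḡ_ℓ` is a `φ`-average of translates of `y ↦ g(√(1 - θ_ℓ²) y)`, it inherits the Hölder bound of
that rescaled function, whose constant is `(1 - θ_ℓ²)^{α/2} C`. A Hölder `g` is continuous, so all the
integrands are measurable and the bound also holds where the integrals take the junk value `0`. -/

lemma gpdf_eq_gaussianPDFReal : gpdf = gaussianPDFReal 0 1 := by
  ext x
  simp [gpdf, gaussianPDFReal, div_eq_inv_mul]

lemma measurable_gpdf : Measurable gpdf :=
  gpdf_eq_gaussianPDFReal ▸ measurable_gaussianPDFReal 0 1

lemma gpdf_nonneg (z : ℝ) : 0 ≤ gpdf z :=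
  gpdf_eq_gaussianPDFReal ▸ gaussianPDFReal_nonneg 0 1 z

lemma integral_gpdf : ∫ z, gpdf z = 1 := by
  rw [gpdf_eq_gaussianPDFReal]
  exact integral_gaussianPDFReal_eq_one 0 one_ne_zero

lemma Finset.sum_mul_update {ι : Type*} [Fintype ι] [DecidableEq ι] (θ x : ι → ℝ) (ℓ : ι) (z : ℝ) :
    ∑ j, θ j * Function.update x ℓ z j = θ ℓ * z + ∑ j, (if j = ℓ then 0 else θ j) * x j := by
  simp [Function.update_apply, mul_ite, ite_mul, Finset.sum_ite, Finset.filter_ne', Finset.filter_eq']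

lemma continuous_of_abs_sub_le_rpow {g : ℝ → ℝ} {C α : ℝ} (hα : 0 < α)
    (hg : ∀ y y', |g y - g y'| ≤ C * |y - y'| ^ α) : Continuous g := by
  refine continuous_iff_continuousAt.2 fun y => ?_
  rw [ContinuousAt, tendsto_iff_dist_tendsto_zero]
  refine squeeze_zero (fun _ => dist_nonneg) (fun y' => hg y' y) ?_
  have : Tendsto (fun y' => C * |y' - y| ^ α) (nhds y) (nhds (C * |y - y| ^ α)) :=
    ((continuous_const.mul ((continuous_id.sub continuous_const).abs.rpow_const
      fun _ => Or.inr hα.le))).tendsto y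
  simpa [Real.zero_rpow hα.ne'] using this

lemma abs_integral_sub_integral_le {α : Type*} [MeasurableSpace α] {μ : Measure α}
    {F G H : α → ℝ} (hF : AEStronglyMeasurable F μ) (hG : AEStronglyMeasurable G μ)
    (hH : Integrable H μ) (hFG : ∀ᵐ x ∂μ, |F x - G x| ≤ H x) :
    |∫ x, F x ∂μ - ∫ x, G x ∂μ| ≤ ∫ x, H x ∂μ := by
  have hdiff : Integrable (F - G) μ := hH.mono' (hF.sub hG) hFG
  by_cases hGi : Integrable G μ
  · have hFi : Integrable F μ := by simpa using hdiff.add hGi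
    rw [← integral_sub hFi hGi]
    exact norm_integral_le_of_norm_le hH (f := fun x => F x - G x) hFG
  · have hFi : ¬ Integrable F μ := fun hFi => hGi (by simpa using hFi.sub hdiff)
    rw [integral_undef hFi, integral_undef hGi, sub_zero, abs_zero]
    exact integral_nonneg_of_ae (hFG.mono fun x hx => (abs_nonneg _).trans hx)

lemma abs_integral_mul_comp_sub_le_of_holder {w g : ℝ → ℝ} {C α : ℝ} (hα : 0 < α)
    (hw : Measurable w) (hw_nonneg : ∀ z, 0 ≤ w z) (hw_one : ∫ z, w z = 1)
    (hg : ∀ y y', |g y - g y'| ≤ C * |y - y'| ^ α) {s : ℝ} (hs : 0 ≤ s) (a y y' : ℝ) :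
    |(∫ z, w z * g (a * z + s * y)) - ∫ z, w z * g (a * z + s * y')|
      ≤ s ^ α * C * |y - y'| ^ α := by
  have hgc := continuous_of_abs_sub_le_rpow hα hg
  have hmeas : ∀ y, AEStronglyMeasurable (fun z => w z * g (a * z + s * y)) :=
    fun y => (hw.mul (hgc.measurable.comp (by fun_prop))).aestronglyMeasurable
  have hpointwise : ∀ z, |w z * g (a * z + s * y) - w z * g (a * z + s * y')|
      ≤ w z * (s ^ α * C * |y - y'| ^ α) := fun z => by
    rw [← mul_sub, abs_mul, abs_of_nonneg (hw_nonneg z)]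
    refine mul_le_mul_of_nonneg_left ((hg _ _).trans_eq ?_) (hw_nonneg z)
    rw [show a * z + s * y - (a * z + s * y') = s * (y - y') by ring, abs_mul, abs_of_nonneg hs,
      Real.mul_rpow hs (abs_nonneg _)]
    ring
  calc _ ≤ ∫ z, w z * (s ^ α * C * |y - y'| ^ α) :=
        abs_integral_sub_integral_le (hmeas y) (hmeas y')
          ((Integrable.of_integral_ne_zero (by simp [hw_one])).mul_const _)
          (ae_of_all _ hpointwise)
    _ = s ^ α * C * |y - y'| ^ α := by rw [integral_mul_const, hw_one, one_mul]

theorem stmt15_general (d : ℕ) (θ : Fin d → ℝ)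
    (ℓ : Fin d) (hℓ : |θ ℓ| < 1)
    (g : ℝ → ℝ)
    (f : (Fin d → ℝ) → ℝ) (hf : ∀ x, f x = g (∑ j, θ j * x j))
    (θstar : Fin d → ℝ)
    (hθstar : ∀ j, θstar j
      = (if j = ℓ then 0 else θ j) / Real.sqrt (1 - θ ℓ ^ 2))
    (gbar : ℝ → ℝ)
    (hgbar : ∀ y, gbar y
      = ∫ z : ℝ, gpdf z * g (θ ℓ * z + Real.sqrt (1 - θ ℓ ^ 2) * y)) :
    (∀ x, preint d f ℓ x = gbar (∑ j, θstar j * x j))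
    ∧ (∀ C α : ℝ, 0 < α → α ≤ 1 →
        (∀ y y' : ℝ, |g y - g y'| ≤ C * |y - y'| ^ α) →
        ∀ y y' : ℝ,
          |gbar y - gbar y'| ≤ (1 - θ ℓ ^ 2) ^ (α / 2) * C * |y - y'| ^ α) := by
  have hpos : 0 < 1 - θ ℓ ^ 2 := by nlinarith [abs_lt.1 hℓ, sq_abs (θ ℓ)]
  refine ⟨fun x => ?_, fun C α hα _ hg y y' => ?_⟩
  · have hsum : ∀ z, ∑ j, θ j * Function.update x ℓ z j
        = θ ℓ * z + Real.sqrt (1 - θ ℓ ^ 2) * ∑ j, θstar j * x j := fun z => by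
      simp only [Finset.sum_mul_update, hθstar, Finset.mul_sum]
      congr 1
      refine Finset.sum_congr rfl fun j _ => ?_
      field_simp
    simp only [preint, hgbar, hf, hsum]
  · have hsα : Real.sqrt (1 - θ ℓ ^ 2) ^ α = (1 - θ ℓ ^ 2) ^ (α / 2) := by
      rw [Real.sqrt_eq_rpow, ← Real.rpow_mul hpos.le, one_div_mul_eq_div]
    rw [hgbar, hgbar, ← hsα]
    exact abs_integral_mul_comp_sub_le_of_holder hα measurable_gpdf gpdf_nonneg integral_gpdf hg
      (Real.sqrt_nonneg _) _ y y'

/-- Proposition 5.1: preintegration of a ridge function is again a ridge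
function, and any Hölder condition is preserved with constant
`(1 − θ_ℓ²)^{α/2} C`. -/
theorem stmt15 (d : ℕ) (θ : Fin d → ℝ) (hθ : ∑ j, θ j ^ 2 = 1)
    (ℓ : Fin d) (hℓ : |θ ℓ| < 1)
    (g : ℝ → ℝ) (hgm : Measurable g)
    (hL2 : MemLp (fun x : Fin d → ℝ => g (∑ j, θ j * x j)) 2 (stdGaussian d))
    (f : (Fin d → ℝ) → ℝ) (hf : ∀ x, f x = g (∑ j, θ j * x j))
    (θstar : Fin d → ℝ)
    (hθstar : ∀ j, θstar j
      = (if j = ℓ then 0 else θ j) / Real.sqrt (1 - θ ℓ ^ 2))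
    (gbar : ℝ → ℝ)
    (hgbar : ∀ y, gbar y
      = ∫ z : ℝ, gpdf z * g (θ ℓ * z + Real.sqrt (1 - θ ℓ ^ 2) * y)) :
    (∀ x, preint d f ℓ x = gbar (∑ j, θstar j * x j))
    ∧ (∀ C α : ℝ, 0 < α → α ≤ 1 →
        (∀ y y' : ℝ, |g y - g y'| ≤ C * |y - y'| ^ α) →
        ∀ y y' : ℝ,
          |gbar y - gbar y'| ≤ (1 - θ ℓ ^ 2) ^ (α / 2) * C * |y - y'| ^ α) :=
  stmt15_general d θ ℓ hℓ g f hf θstar hθstar gbar hgbar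

end
end
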